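/- Let a > 0, γ > 0, 0 < β < 1, and set Γ(x,t) = x - t^β. Let f be a Schwartz function on ℝ such that for almost every x ∈ ℝ, lim_{t→0⁺} t^{-min{β,γ}} (P_{a,γ}^t f(Γ(x,t)) - f(x)) = 0. Then f ≡ 0. -/

import Mathlib

/-!
Along the curve, `landau` multiplies `f̂(ξ) e^{ixξ}` by `exp Z_t(ξ)` with
`Z_t(ξ) = i (t |ξ|^a - t^β ξ) - t^γ |ξ|^a`. Put `m = min β γ`. Since `‖e^z - 1‖ ≤ ‖z‖` when
`Re z ≤ 0` and `‖Z_t(ξ)‖ ≤ t^m (|ξ| + 2 |ξ|^a)` for `t ≤ 1`, dominated convergence shows that the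
difference quotient tends to `(1/2π) ∫ f̂(ξ) Q(ξ) e^{ixξ} dξ`, where `Q = lim Z_t / t^m` is `-iξ`,
`-|ξ|^a` or their sum according as `β < γ`, `β > γ` or `β = γ`. The hypothesis makes this
continuous function of `x` vanish almost everywhere, hence everywhere, so Fourier inversion gives
`f̂ Q = 0`. As `Q ξ ≠ 0` for `ξ ≠ 0`, continuity gives `f̂ = 0`, and inversion again gives `f = 0`.
-/

open MeasureTheory Filter

/-- The Fourier transform `f̂(ξ) = ∫ f(y) e^{-iξy} dy`. -/
noncomputable def fhat (f : ℝ → ℂ) (ξ : ℝ) : ℂ :=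
  ∫ y : ℝ, f y * Complex.exp (-(Complex.I * (ξ : ℂ) * (y : ℂ)))

/-- The Landau type Schrödinger operator
`P_{a,γ}^t f(x) = (1/2π) ∫ f̂(ξ) e^{ixξ} e^{it|ξ|^a} e^{-t^γ|ξ|^a} dξ`. -/
noncomputable def landau (a γ : ℝ) (f : ℝ → ℂ) (t x : ℝ) : ℂ :=
  (1 / (2 * Real.pi)) *
    ∫ ξ : ℝ, fhat f ξ * Complex.exp (Complex.I * (x : ℂ) * (ξ : ℂ)) *
      Complex.exp (Complex.I * ((t * |ξ| ^ a : ℝ) : ℂ)) *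
      Complex.exp (-((t ^ γ * |ξ| ^ a : ℝ) : ℂ))

open Complex FourierTransform Topology
open scoped Real

lemma Real.rpow_le_one_add_pow_ceil {x s : ℝ} (hx : 0 ≤ x) (hs : 0 ≤ s) :
    x ^ s ≤ 1 + x ^ ⌈s⌉₊ := by
  rcases le_or_gt x 1 with hx1 | hx1
  · linarith [Real.rpow_le_one hx hx1 hs, pow_nonneg hx ⌈s⌉₊]
  · have := Real.rpow_le_rpow_of_exponent_le hx1.le (Nat.le_ceil s)
    rw [Real.rpow_natCast] at this
    linarith

lemma SchwartzMap.integrable_rpow_mul {D V : Type*} [NormedAddCommGroup D] [NormedSpace ℝ D]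
    [MeasurableSpace D] [BorelSpace D] [SecondCountableTopology D] [NormedAddCommGroup V]
    [NormedSpace ℝ V] {μ : Measure D} [μ.HasTemperateGrowth] (f : SchwartzMap D V) {s : ℝ}
    (hs : 0 ≤ s) : Integrable (fun x ↦ ‖x‖ ^ s * ‖f x‖) μ := by
  refine ((f.integrable_pow_mul μ 0).add (f.integrable_pow_mul μ ⌈s⌉₊)).mono'
    (by fun_prop) (Eventually.of_forall fun x ↦ ?_)
  rw [norm_mul, norm_norm, Real.norm_of_nonneg (by positivity), Pi.add_apply, pow_zero, one_mul,
    ← one_add_mul]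
  exact mul_le_mul_of_nonneg_right (Real.rpow_le_one_add_pow_ceil (norm_nonneg x) hs)
    (norm_nonneg _)

lemma Complex.norm_exp_sub_one_le_of_re_nonpos {z : ℂ} (hz : z.re ≤ 0) :
    ‖exp z - 1‖ ≤ ‖z‖ := by
  have hderiv : ∀ s ∈ Set.Icc (0 : ℝ) 1,
      HasDerivWithinAt (fun s : ℝ ↦ exp (s * z)) (z * exp (s * z)) (Set.Icc 0 1) s := by
    intro s _
    simpa [mul_comm] using (((hasDerivAt_id (s : ℂ)).comp_ofReal.mul_const z).cexp).hasDerivWithinAt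
  have hbound : ∀ s ∈ Set.Ico (0 : ℝ) 1, ‖z * exp (s * z)‖ ≤ ‖z‖ := by
    intro s hs
    rw [norm_mul, norm_exp]
    refine mul_le_of_le_one_right (norm_nonneg z) (Real.exp_le_one_iff.2 ?_)
    simpa using mul_nonpos_of_nonneg_of_nonpos hs.1 hz
  simpa using norm_image_sub_le_of_norm_deriv_le_segment_01' hderiv hbound

lemma Complex.tendsto_exp_sub_one_div {α : Type*} {l : Filter α} {z s : α → ℂ} {L : ℂ}
    (hs : Tendsto s l (𝓝 0)) (hs0 : ∀ᶠ t in l, s t ≠ 0)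
    (hzs : Tendsto (fun t ↦ z t / s t) l (𝓝 L)) :
    Tendsto (fun t ↦ (exp (z t) - 1) / s t) l (𝓝 L) := by
  have hz : Tendsto z l (𝓝 0) := by
    simpa using (hzs.mul hs).congr' (hs0.mono fun t ht ↦ div_mul_cancel₀ _ ht)
  -- `exp z - 1 = z * dslope exp 0 z`, and `dslope exp 0` is continuous at `0` with value `1`.
  have hslope : Tendsto (fun t ↦ dslope exp 0 (z t)) l (𝓝 1) := by
    simpa [Function.comp_def] using
      (continuousAt_dslope_same.2 (differentiableAt_exp (x := 0))).tendsto.comp hz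
  refine (one_mul L ▸ hslope.mul hzs).congr fun t ↦ ?_
  have := sub_smul_dslope exp 0 (z t)
  rw [sub_zero, smul_eq_mul, exp_zero] at this
  rw [mul_div_assoc', mul_comm, this]

lemma Complex.norm_exp_I_mul_ofReal_mul_ofReal (x ξ : ℝ) : ‖exp (I * x * ξ)‖ = 1 := by
  rw [mul_assoc, ← ofReal_mul, mul_comm, norm_exp_ofReal_mul_I]

noncomputable def SchwartzMap.fhat (f : SchwartzMap ℝ ℂ) : SchwartzMap ℝ ℂ :=
  SchwartzMap.compCLMOfContinuousLinearEquiv ℂ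
    (ContinuousLinearEquiv.unitsEquivAut ℝ (Units.mk0 (2 * π)⁻¹ (by positivity))) (𝓕 f)

lemma fhat_eq_fourier (f : ℝ → ℂ) (ξ : ℝ) : fhat f ξ = 𝓕 f (ξ * (2 * π)⁻¹) := by
  rw [Real.fourier_real_eq_integral_exp_smul, fhat]
  congr 1 with y
  rw [smul_eq_mul, mul_comm]
  congr 2
  push_cast
  field_simp

lemma SchwartzMap.coe_fhat (f : SchwartzMap ℝ ℂ) : ⇑f.fhat = _root_.fhat f := by
  ext ξ
  simp [SchwartzMap.fhat, fhat_eq_fourier, SchwartzMap.fourier_coe]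

lemma continuous_fhat (f : SchwartzMap ℝ ℂ) : Continuous (fhat f) :=
  f.coe_fhat ▸ f.fhat.continuous

lemma integrable_fhat (f : SchwartzMap ℝ ℂ) : Integrable (fhat f) :=
  f.coe_fhat ▸ f.fhat.integrable

lemma integral_mul_exp_eq_fourierInv (G : ℝ → ℂ) (x : ℝ) :
    ∫ ξ, G ξ * exp (I * x * ξ) = 2 * π * 𝓕⁻ (fun u ↦ G (2 * π * u)) x := by
  have hsub := Measure.integral_comp_mul_left (fun ξ ↦ G ξ * exp (I * x * ξ)) (2 * π)
  rw [abs_inv, abs_of_pos Real.two_pi_pos, Complex.real_smul] at hsub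
  have hcomp : 𝓕⁻ (fun u ↦ G (2 * π * u)) x
      = ∫ u : ℝ, G (2 * π * u) * exp (I * x * (2 * π * u : ℝ)) := by
    rw [Real.fourierInv_eq']
    congr 1 with u
    rw [smul_eq_mul, mul_comm]
    congr 2
    simp only [RCLike.inner_apply, conj_trivial]
    push_cast
    ring
  rw [hcomp, hsub]
  push_cast
  field_simp

lemma integral_fhat_mul_exp (f : SchwartzMap ℝ ℂ) (x : ℝ) :
    ∫ ξ, fhat f ξ * exp (I * x * ξ) = 2 * π * f x := by
  have hinv := f.continuous.fourierInv_fourier_eq f.integrable (𝓕 f).integrable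
  rw [integral_mul_exp_eq_fourierInv]
  congr 1
  convert congrFun hinv x using 3 with u
  rw [fhat_eq_fourier]
  field_simp

lemma eq_zero_of_ae_integral_mul_exp_eq_zero {G : ℝ → ℂ} (hc : Continuous G) (hi : Integrable G)
    (h : ∀ᵐ x : ℝ, ∫ ξ, G ξ * exp (I * x * ξ) = 0) : G = 0 := by
  set H : ℝ → ℂ := fun u ↦ G (2 * π * u)
  have hHc : Continuous H := by fun_prop
  have hHi : Integrable H := hi.comp_mul_left' Real.two_pi_pos.ne'
  have hinv : 𝓕⁻ H = 0 := by
    refine (Continuous.ae_eq_iff_eq volume ?_ continuous_const).1 ?_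
    · rw [Real.fourierInv_eq_fourier_comp_neg]
      exact VectorFourier.fourierIntegral_continuous Real.continuous_fourierChar
        continuous_inner hHi.comp_neg
    · filter_upwards [h] with x hx
      rw [integral_mul_exp_eq_fourierInv] at hx
      exact (mul_eq_zero.1 hx).resolve_left (by simp [Real.pi_ne_zero])
  have hfour : 𝓕 H = 0 := by
    ext w
    simpa [Real.fourierInv_eq_fourier_neg] using congrFun hinv (-w)
  have hH : H = 0 := by
    rw [← hHc.fourierInv_fourier_eq hHi (by rw [hfour]; exact integrable_zero _ _ _), hfour]
    ext w
    simp [Real.fourierInv_eq]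
  ext ξ
  simpa [H, mul_div_cancel₀ ξ Real.two_pi_pos.ne'] using congrFun hH (ξ / (2 * π))

lemma integrable_norm_fhat_mul_abs_add_rpow (f : SchwartzMap ℝ ℂ) {a : ℝ} (ha : 0 ≤ a) :
    Integrable (fun ξ ↦ ‖fhat f ξ‖ * (|ξ| + 2 * |ξ| ^ a)) := by
  have h1 := f.fhat.integrable_rpow_mul (μ := volume) zero_le_one
  have hpow := f.fhat.integrable_rpow_mul (μ := volume) ha
  refine (h1.add (hpow.const_mul 2)).congr (Eventually.of_forall fun ξ ↦ ?_)
  simp only [Pi.add_apply, SchwartzMap.coe_fhat, Real.rpow_one, Real.norm_eq_abs]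
  ring

/-- `exp (curvePhase a 1 β γ t ξ)` is the multiplier of `landau` along `Γ(x, t) = x - t ^ β`.
Dividing by `t ^ m` lowers the three exponents by `m`; since `(0 : ℝ) ^ p` is `1` for `p = 0` and
`0` for `p > 0`, the lowered phase at `t = 0` is the limit symbol `Q`. -/
noncomputable def curvePhase (a p q r t ξ : ℝ) : ℂ :=
  I * ((t ^ p * |ξ| ^ a - t ^ q * ξ : ℝ) : ℂ) - ((t ^ r * |ξ| ^ a : ℝ) : ℂ)

section CurvePhase

variable {a p q r t : ℝ}

lemma curvePhase_re_nonpos (ht : 0 ≤ t) (ξ : ℝ) : (curvePhase a p q r t ξ).re ≤ 0 := by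
  simpa [curvePhase] using mul_nonneg (Real.rpow_nonneg ht r) (Real.rpow_nonneg (abs_nonneg ξ) a)

lemma curvePhase_div_rpow (ht : 0 < t) (m ξ : ℝ) :
    curvePhase a p q r t ξ / ((t ^ m : ℝ) : ℂ) = curvePhase a (p - m) (q - m) (r - m) t ξ := by
  have : ((t ^ m : ℝ) : ℂ) ≠ 0 := ofReal_ne_zero.2 (Real.rpow_pos_of_pos ht m).ne'
  simp only [curvePhase, Real.rpow_sub ht]
  push_cast
  field_simp

lemma continuous_curvePhase (ha : 0 ≤ a) (p q r t : ℝ) :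
    Continuous (curvePhase a p q r t) := by
  have := Real.continuous_rpow_const ha
  unfold curvePhase
  fun_prop

lemma norm_curvePhase_le (hp : 0 ≤ p) (hq : 0 ≤ q) (hr : 0 ≤ r) (ht0 : 0 ≤ t) (ht1 : t ≤ 1)
    (ξ : ℝ) : ‖curvePhase a p q r t ξ‖ ≤ |ξ| + 2 * |ξ| ^ a := by
  have hA : 0 ≤ |ξ| ^ a := Real.rpow_nonneg (abs_nonneg ξ) a
  have hle : ∀ s : ℝ, 0 ≤ s → 0 ≤ t ^ s ∧ t ^ s ≤ 1 := fun s hs ↦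
    ⟨Real.rpow_nonneg ht0 s, Real.rpow_le_one ht0 ht1 hs⟩
  obtain ⟨hp0, hp1⟩ := hle p hp
  obtain ⟨hq0, hq1⟩ := hle q hq
  obtain ⟨hr0, hr1⟩ := hle r hr
  calc ‖curvePhase a p q r t ξ‖
      ≤ |t ^ p * |ξ| ^ a - t ^ q * ξ| + |t ^ r * |ξ| ^ a| := by
        refine (norm_sub_le _ _).trans_eq ?_
        rw [norm_mul, norm_I, one_mul, norm_real, norm_real, Real.norm_eq_abs, Real.norm_eq_abs]
    _ ≤ (t ^ p * |ξ| ^ a + t ^ q * |ξ|) + t ^ r * |ξ| ^ a := by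
        gcongr
        · refine (abs_sub _ _).trans_eq ?_
          rw [abs_mul, abs_mul, abs_of_nonneg hp0, abs_of_nonneg hA, abs_of_nonneg hq0]
        · rw [abs_of_nonneg (mul_nonneg hr0 hA)]
    _ ≤ |ξ| + 2 * |ξ| ^ a := by
        nlinarith [mul_le_mul_of_nonneg_right hp1 hA, mul_le_mul_of_nonneg_right hq1 (abs_nonneg ξ),
          mul_le_mul_of_nonneg_right hr1 hA]

lemma curvePhase_zero_ne_zero (h : p ≠ 0 ∧ q = 0 ∨ r = 0) {ξ : ℝ} (hξ : ξ ≠ 0) :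
    curvePhase a p q r 0 ξ ≠ 0 := by
  intro h0
  rcases h with ⟨hp, rfl⟩ | rfl
  · have him := congrArg Complex.im h0
    simp [curvePhase, Real.zero_rpow hp] at him
    exact hξ him
  · have hre := congrArg Complex.re h0
    simp [curvePhase] at hre
    exact (Real.rpow_pos_of_pos (abs_pos.2 hξ) a).ne' hre

lemma norm_exp_curvePhase_le_one (ht : 0 ≤ t) (ξ : ℝ) :
    ‖exp (curvePhase a p q r t ξ)‖ ≤ 1 := by
  rw [norm_exp, Real.exp_le_one_iff]
  exact curvePhase_re_nonpos ht ξ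

lemma norm_exp_curvePhase_sub_one_div_le {m : ℝ} (hp : m ≤ p) (hq : m ≤ q)
    (hr : m ≤ r) (ht0 : 0 < t) (ht1 : t ≤ 1) (ξ : ℝ) :
    ‖(exp (curvePhase a p q r t ξ) - 1) / ((t ^ m : ℝ) : ℂ)‖ ≤ |ξ| + 2 * |ξ| ^ a := by
  calc _ ≤ ‖curvePhase a p q r t ξ / ((t ^ m : ℝ) : ℂ)‖ := by
        rw [norm_div, norm_div]
        exact div_le_div_of_nonneg_right
          (norm_exp_sub_one_le_of_re_nonpos (curvePhase_re_nonpos ht0.le ξ)) (norm_nonneg _)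
    _ ≤ _ := by
        rw [curvePhase_div_rpow ht0]
        exact norm_curvePhase_le (sub_nonneg.2 hp) (sub_nonneg.2 hq) (sub_nonneg.2 hr) ht0.le ht1 ξ

lemma tendsto_exp_curvePhase_sub_one_div {m : ℝ} (hm : 0 < m) (hp : m ≤ p) (hq : m ≤ q)
    (hr : m ≤ r) (ξ : ℝ) :
    Tendsto (fun t ↦ (exp (curvePhase a p q r t ξ) - 1) / ((t ^ m : ℝ) : ℂ)) (𝓝[>] 0)
      (𝓝 (curvePhase a (p - m) (q - m) (r - m) 0 ξ)) := by
  have hpos : ∀ᶠ t in 𝓝[>] (0 : ℝ), 0 < t := self_mem_nhdsWithin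
  refine tendsto_exp_sub_one_div ?_
    (hpos.mono fun t ht ↦ ofReal_ne_zero.2 (Real.rpow_pos_of_pos ht m).ne') ?_
  · have := ((Real.continuous_rpow_const hm.le).tendsto 0).mono_left
      (nhdsWithin_le_nhds (s := Set.Ioi 0))
    rw [Real.zero_rpow hm.ne'] at this
    simpa using this.ofReal
  · have := Real.continuous_rpow_const (sub_nonneg.2 hp)
    have := Real.continuous_rpow_const (sub_nonneg.2 hq)
    have := Real.continuous_rpow_const (sub_nonneg.2 hr)
    have hcont : Continuous (fun t ↦ curvePhase a (p - m) (q - m) (r - m) t ξ) := by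
      unfold curvePhase
      fun_prop
    refine ((hcont.tendsto 0).mono_left nhdsWithin_le_nhds).congr' ?_
    filter_upwards [hpos] with t ht using (curvePhase_div_rpow ht m ξ).symm

end CurvePhase

lemma landau_sub_rpow_eq (a β γ : ℝ) (f : ℝ → ℂ) (t x : ℝ) :
    landau a γ f t (x - t ^ β)
      = 1 / (2 * π) * ∫ ξ, fhat f ξ * exp (I * x * ξ) * exp (curvePhase a 1 β γ t ξ) := by
  rw [landau]
  congr 2 with ξ
  simp only [mul_assoc, ← exp_add, curvePhase, Real.rpow_one]
  push_cast
  ring_nf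

lemma landau_sub_rpow_sub_div_eq {a β γ t : ℝ} (ha : 0 ≤ a) (ht : 0 ≤ t) (f : SchwartzMap ℝ ℂ)
    (x m : ℝ) :
    (landau a γ f t (x - t ^ β) - f x) / ((t ^ m : ℝ) : ℂ) = 1 / (2 * π) * ∫ ξ,
      fhat f ξ * exp (I * x * ξ) * ((exp (curvePhase a 1 β γ t ξ) - 1) / ((t ^ m : ℝ) : ℂ)) := by
  have hg : Integrable (fun ξ ↦ fhat f ξ * exp (I * x * ξ)) :=
    (integrable_fhat f).mul_bdd (by fun_prop : Continuous _).aestronglyMeasurable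
      (Eventually.of_forall fun ξ ↦ (norm_exp_I_mul_ofReal_mul_ofReal x ξ).le)
  have hgZ : Integrable (fun ξ ↦ fhat f ξ * exp (I * x * ξ) * exp (curvePhase a 1 β γ t ξ)) :=
    hg.mul_bdd (continuous_curvePhase ha 1 β γ t).cexp.aestronglyMeasurable
      (Eventually.of_forall fun ξ ↦ norm_exp_curvePhase_le_one ht ξ)
  have hfx : f x = 1 / (2 * π) * ∫ ξ, fhat f ξ * exp (I * x * ξ) := by
    rw [integral_fhat_mul_exp]
    field_simp
  rw [landau_sub_rpow_eq, hfx, ← mul_sub, ← integral_sub hgZ hg, mul_div_assoc, ← integral_div]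
  congr 2 with ξ
  ring

theorem tendsto_landau_sub_div_rpow {a β γ : ℝ} (ha : 0 ≤ a) (hβ0 : 0 < β) (hβ1 : β ≤ 1)
    (hγ : 0 < γ) (f : SchwartzMap ℝ ℂ) (x : ℝ) :
    Tendsto (fun t : ℝ ↦ (landau a γ f t (x - t ^ β) - f x) / ((t ^ min β γ : ℝ) : ℂ)) (𝓝[>] 0)
      (𝓝 (1 / (2 * π) * ∫ ξ, fhat f ξ * curvePhase a (1 - min β γ) (β - min β γ) (γ - min β γ) 0 ξ *
        exp (I * x * ξ))) := by
  set m := min β γ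
  have hm1 : m ≤ 1 := (min_le_left β γ).trans hβ1
  set g : ℝ → ℂ := fun ξ ↦ fhat f ξ * exp (I * x * ξ)
  have hgc : Continuous g := (continuous_fhat f).mul (by fun_prop)
  have hnorm_g : ∀ ξ, ‖g ξ‖ = ‖fhat f ξ‖ := fun ξ ↦ by
    rw [norm_mul, norm_exp_I_mul_ofReal_mul_ofReal, mul_one]
  have hlim : Tendsto
      (fun t ↦ ∫ ξ, g ξ * ((exp (curvePhase a 1 β γ t ξ) - 1) / ((t ^ m : ℝ) : ℂ))) (𝓝[>] 0)
      (𝓝 (∫ ξ, fhat f ξ * curvePhase a (1 - m) (β - m) (γ - m) 0 ξ * exp (I * x * ξ))) := by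
    refine tendsto_integral_filter_of_dominated_convergence
      (fun ξ ↦ ‖fhat f ξ‖ * (|ξ| + 2 * |ξ| ^ a)) (Eventually.of_forall fun t ↦ ?_) ?_
      (integrable_norm_fhat_mul_abs_add_rpow f ha) (Eventually.of_forall fun ξ ↦ ?_)
    · exact (hgc.mul (((continuous_curvePhase ha 1 β γ t).cexp.sub continuous_const).div_const
        _)).aestronglyMeasurable
    · filter_upwards [Ioo_mem_nhdsGT one_pos] with t ht
      refine Eventually.of_forall fun ξ ↦ ?_
      rw [norm_mul, hnorm_g]
      exact mul_le_mul_of_nonneg_left (norm_exp_curvePhase_sub_one_div_le hm1 (min_le_left β γ)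
        (min_le_right β γ) ht.1 ht.2.le ξ) (norm_nonneg _)
    · rw [mul_right_comm]
      exact tendsto_const_nhds.mul (tendsto_exp_curvePhase_sub_one_div (lt_min hβ0 hγ) hm1
        (min_le_left β γ) (min_le_right β γ) ξ)
  exact (hlim.const_mul _).congr' (eventually_mem_nhdsWithin.mono fun t ht ↦
    (landau_sub_rpow_sub_div_eq ha (le_of_lt ht) f x m).symm)

/-- With `Γ(x,t) = x - t^β`, `0 < β < 1`: if `f` is Schwartz and
`(P_{a,γ}^t f(Γ(x,t)) - f(x))/t^{min{β,γ}} → 0` as `t → 0⁺` for a.e. `x`,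
then `f ≡ 0`. -/
theorem schwartz_rate_rigidity_curve (a γ β : ℝ) (ha : 0 < a) (hγ : 0 < γ)
    (hβ0 : 0 < β) (hβ1 : β < 1) (f : SchwartzMap ℝ ℂ)
    (h : ∀ᵐ x : ℝ, Tendsto
        (fun t : ℝ =>
          (landau a γ (⇑f) t (x - t ^ β) - f x) / ((t ^ (min β γ) : ℝ) : ℂ))
        (nhdsWithin 0 (Set.Ioi 0)) (nhds 0)) :
    ∀ x : ℝ, f x = 0 := by
  set Q := curvePhase a (1 - min β γ) (β - min β γ) (γ - min β γ) 0
  have hQ : ∀ᵐ x : ℝ, ∫ ξ, fhat f ξ * Q ξ * exp (I * x * ξ) = 0 := by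
    filter_upwards [h] with x hx
    have := tendsto_nhds_unique hx (tendsto_landau_sub_div_rpow ha.le hβ0 hβ1.le hγ f x)
    simpa [Real.pi_ne_zero] using this.symm
  have hfQc : Continuous (fun ξ ↦ fhat f ξ * Q ξ) :=
    (continuous_fhat f).mul (continuous_curvePhase ha.le _ _ _ 0)
  have hfQ : (fun ξ ↦ fhat f ξ * Q ξ) = 0 := by
    refine eq_zero_of_ae_integral_mul_exp_eq_zero hfQc ?_ hQ
    refine (integrable_norm_fhat_mul_abs_add_rpow f ha.le).mono' hfQc.aestronglyMeasurable
      (Eventually.of_forall fun ξ ↦ ?_)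
    rw [norm_mul]
    exact mul_le_mul_of_nonneg_left (norm_curvePhase_le (by simp [hβ1.le]) (by simp) (by simp)
      le_rfl zero_le_one ξ) (norm_nonneg _)
  have hQ0 : (1 - min β γ ≠ 0 ∧ β - min β γ = 0) ∨ γ - min β γ = 0 := by
    rcases min_choice β γ with hm | hm <;> rw [hm]
    · exact Or.inl ⟨sub_ne_zero.2 hβ1.ne', sub_self β⟩
    · exact Or.inr (sub_self γ)
  have hfhat : fhat f = 0 :=
    (continuous_fhat f).ext_on (dense_compl_singleton 0) continuous_const fun ξ hξ ↦
      (mul_eq_zero.1 (congrFun hfQ ξ)).resolve_right (curvePhase_zero_ne_zero hQ0 hξ)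
  intro x
  simpa [hfhat, Real.pi_ne_zero] using (integral_fhat_mul_exp f x).symm
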